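/- arXiv:math/0507478 — 2 statements merged into one kernel-verified Lean document; each statement's English description precedes it below -/
import Mathlib

section
/- In U_q(g), for i ≠ j one has Σ_{r=0}^{1-A_ij} (-1)^r [1-A_ij choose r]_i (K_i^{-1} + F_i(q_i - q_i^{-1}))^{1-A_ij-r} K_j^{-1} (K_i^{-1} + F_i(q_i - q_i^{-1}))^{r} = K_i^{A_ij - 1} K_j^{-1} Π_{s=0}^{-A_ij} (1 - q_i^{A_ij + 2s}). -/
open FreeAlgebra
open scoped TensorProduct

noncomputable section

/-- The field `𝕂(q)` of rational functions in the indeterminate `q` over `𝕂`. -/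
abbrev Kq (K : Type) [Field K] : Type := RatFunc K

/-- The indeterminate `q` viewed as an element of `𝕂(q)`. -/
def qv (K : Type) [Field K] : Kq K := RatFunc.X

/-- `q_i = q^{d_i}`, given the exponent `di = d_i`. -/
def qi (K : Type) [Field K] (di : ℕ) : Kq K := qv K ^ di

/-- The quantum integer `[m]_i = (q_i^m - q_i^{-m})/(q_i - q_i⁻¹)`. -/
def qnum (K : Type) [Field K] (di : ℕ) (m : ℤ) : Kq K :=
  (qi K di ^ m - qi K di ^ (-m)) / (qi K di - (qi K di)⁻¹)

/-- The quantum factorial `[m]_i! = [m]_i [m-1]_i ⋯ [1]_i`, with `[0]_i! = 1`. -/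
def qfac (K : Type) [Field K] (di : ℕ) : ℕ → Kq K
  | 0 => 1
  | m + 1 => qnum K di (m + 1) * qfac K di m

/-- The Gaussian binomial coefficient `[m choose r]_i = [m]_i!/([r]_i![m-r]_i!)`. -/
def qbin (K : Type) [Field K] (di m r : ℕ) : Kq K :=
  qfac K di m / (qfac K di r * qfac K di (m - r))

/-- Chevalley generators `E_i, F_i, K_i, K_i⁻¹` of `U_q(g)`. -/
inductive CGen (n : ℕ) : Type
  | E : Fin n → CGen n
  | F : Fin n → CGen n
  | K : Fin n → CGen n
  | Kinv : Fin n → CGen n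

/-- The defining relations (R1)–(R7) of `U_q(g)` in the Chevalley presentation. -/
inductive CRel (K : Type) [Field K] {n : ℕ} (A : Matrix (Fin n) (Fin n) ℤ) (d : Fin n → ℕ) :
    FreeAlgebra (Kq K) (CGen n) → FreeAlgebra (Kq K) (CGen n) → Prop
  | R1a (i : Fin n) : CRel K A d (ι (Kq K) (CGen.K i) * ι (Kq K) (CGen.Kinv i)) 1
  | R1b (i : Fin n) : CRel K A d (ι (Kq K) (CGen.Kinv i) * ι (Kq K) (CGen.K i)) 1
  | R2 (i j : Fin n) : CRel K A d (ι (Kq K) (CGen.K i) * ι (Kq K) (CGen.K j))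
      (ι (Kq K) (CGen.K j) * ι (Kq K) (CGen.K i))
  | R3 (i j : Fin n) : CRel K A d
      (ι (Kq K) (CGen.K i) * ι (Kq K) (CGen.E j) * ι (Kq K) (CGen.Kinv i))
      (qi K (d i) ^ (A i j) • ι (Kq K) (CGen.E j))
  | R4 (i j : Fin n) : CRel K A d
      (ι (Kq K) (CGen.K i) * ι (Kq K) (CGen.F j) * ι (Kq K) (CGen.Kinv i))
      (qi K (d i) ^ (-(A i j)) • ι (Kq K) (CGen.F j))
  | R5 (i j : Fin n) : CRel K A d
      (ι (Kq K) (CGen.E i) * ι (Kq K) (CGen.F j) - ι (Kq K) (CGen.F j) * ι (Kq K) (CGen.E i))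
      (if i = j then (qi K (d i) - (qi K (d i))⁻¹)⁻¹ •
        (ι (Kq K) (CGen.K i) - ι (Kq K) (CGen.Kinv i)) else 0)
  | R6 (i j : Fin n) (hij : i ≠ j) : CRel K A d
      (∑ r ∈ Finset.range ((1 - A i j).toNat + 1),
        ((-1 : Kq K) ^ r * qbin K (d i) (1 - A i j).toNat r) •
          (ι (Kq K) (CGen.E i) ^ ((1 - A i j).toNat - r) * ι (Kq K) (CGen.E j) *
            ι (Kq K) (CGen.E i) ^ r)) 0
  | R7 (i j : Fin n) (hij : i ≠ j) : CRel K A d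
      (∑ r ∈ Finset.range ((1 - A i j).toNat + 1),
        ((-1 : Kq K) ^ r * qbin K (d i) (1 - A i j).toNat r) •
          (ι (Kq K) (CGen.F i) ^ ((1 - A i j).toNat - r) * ι (Kq K) (CGen.F j) *
            ι (Kq K) (CGen.F i) ^ r)) 0

/-- The quantum group `U_q(g)` presented by generators and relations (R1)–(R7). -/
abbrev Uqg (K : Type) [Field K] {n : ℕ} (A : Matrix (Fin n) (Fin n) ℤ) (d : Fin n → ℕ) :=
  RingQuot (CRel K A d)

variable (K : Type) [Field K] {n : ℕ} (A : Matrix (Fin n) (Fin n) ℤ) (d : Fin n → ℕ)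

def genE (i : Fin n) : Uqg K A d := RingQuot.mkAlgHom (Kq K) (CRel K A d) (ι (Kq K) (CGen.E i))
def genF (i : Fin n) : Uqg K A d := RingQuot.mkAlgHom (Kq K) (CRel K A d) (ι (Kq K) (CGen.F i))
def genK (i : Fin n) : Uqg K A d := RingQuot.mkAlgHom (Kq K) (CRel K A d) (ι (Kq K) (CGen.K i))
def genKinv (i : Fin n) : Uqg K A d :=
  RingQuot.mkAlgHom (Kq K) (CRel K A d) (ι (Kq K) (CGen.Kinv i))

/-- Equitable generators `X_i, X_i⁻¹, Y_i, Z_i`. -/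
inductive EGen (n : ℕ) : Type
  | X : Fin n → EGen n
  | Xinv : Fin n → EGen n
  | Y : Fin n → EGen n
  | Z : Fin n → EGen n

/-- The defining relations (E1)–(E8) of the equitable presentation. -/
inductive ERel (K : Type) [Field K] {n : ℕ} (A : Matrix (Fin n) (Fin n) ℤ) (d : Fin n → ℕ) :
    FreeAlgebra (Kq K) (EGen n) → FreeAlgebra (Kq K) (EGen n) → Prop
  | E1a (i : Fin n) : ERel K A d (ι (Kq K) (EGen.X i) * ι (Kq K) (EGen.Xinv i)) 1
  | E1b (i : Fin n) : ERel K A d (ι (Kq K) (EGen.Xinv i) * ι (Kq K) (EGen.X i)) 1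
  | E2 (i j : Fin n) : ERel K A d (ι (Kq K) (EGen.X i) * ι (Kq K) (EGen.X j))
      (ι (Kq K) (EGen.X j) * ι (Kq K) (EGen.X i))
  | E3 (i j : Fin n) : ERel K A d
      (ι (Kq K) (EGen.Y i) * ι (Kq K) (EGen.X j) -
        qi K (d i) ^ (A i j) • (ι (Kq K) (EGen.X j) * ι (Kq K) (EGen.Y i)))
      ((1 - qi K (d i) ^ (A i j)) • (ι (Kq K) (EGen.Xinv i) * ι (Kq K) (EGen.X j)))
  | E4 (i j : Fin n) : ERel K A d
      (ι (Kq K) (EGen.X i) * ι (Kq K) (EGen.Z j) -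
        qi K (d i) ^ (A i j) • (ι (Kq K) (EGen.Z j) * ι (Kq K) (EGen.X i)))
      ((1 - qi K (d i) ^ (A i j)) • (ι (Kq K) (EGen.X i) * ι (Kq K) (EGen.Xinv j)))
  | E5 (i : Fin n) : ERel K A d
      (ι (Kq K) (EGen.Z i) * ι (Kq K) (EGen.Y i) -
        (qi K (d i) ^ 2) • (ι (Kq K) (EGen.Y i) * ι (Kq K) (EGen.Z i)))
      ((1 - qi K (d i) ^ 2) • 1)
  | E6 (i j : Fin n) (hij : i ≠ j) : ERel K A d
      (ι (Kq K) (EGen.Z i) * ι (Kq K) (EGen.Y j) -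
        qi K (d i) ^ (A i j) • (ι (Kq K) (EGen.Y j) * ι (Kq K) (EGen.Z i)))
      ((1 - qi K (d i) ^ (A i j)) • (ι (Kq K) (EGen.Xinv i) * ι (Kq K) (EGen.Xinv j)))
  | E7 (i j : Fin n) (hij : i ≠ j) : ERel K A d
      (∑ r ∈ Finset.range ((1 - A i j).toNat + 1),
        ((-1 : Kq K) ^ r * qbin K (d i) (1 - A i j).toNat r) •
          (ι (Kq K) (EGen.Y i) ^ ((1 - A i j).toNat - r) * ι (Kq K) (EGen.Y j) *
            ι (Kq K) (EGen.Y i) ^ r))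
      ((∏ s ∈ Finset.range ((-(A i j)).toNat + 1), (1 - qi K (d i) ^ (A i j + 2 * (s : ℤ)))) •
        (ι (Kq K) (EGen.Xinv i) ^ (1 - A i j).toNat * ι (Kq K) (EGen.Xinv j)))
  | E8 (i j : Fin n) (hij : i ≠ j) : ERel K A d
      (∑ r ∈ Finset.range ((1 - A i j).toNat + 1),
        ((-1 : Kq K) ^ r * qbin K (d i) (1 - A i j).toNat r) •
          (ι (Kq K) (EGen.Z i) ^ ((1 - A i j).toNat - r) * ι (Kq K) (EGen.Z j) *
            ι (Kq K) (EGen.Z i) ^ r))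
      ((∏ s ∈ Finset.range ((-(A i j)).toNat + 1), (1 - qi K (d i) ^ (A i j + 2 * (s : ℤ)))) •
        (ι (Kq K) (EGen.Xinv i) ^ (1 - A i j).toNat * ι (Kq K) (EGen.Xinv j)))

/-- The equitable algebra `U` presented by generators and relations (E1)–(E8). -/
abbrev Ueqg (K : Type) [Field K] {n : ℕ} (A : Matrix (Fin n) (Fin n) ℤ) (d : Fin n → ℕ) :=
  RingQuot (ERel K A d)

def genX (i : Fin n) : Ueqg K A d := RingQuot.mkAlgHom (Kq K) (ERel K A d) (ι (Kq K) (EGen.X i))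
def genXinv (i : Fin n) : Ueqg K A d :=
  RingQuot.mkAlgHom (Kq K) (ERel K A d) (ι (Kq K) (EGen.Xinv i))
def genY (i : Fin n) : Ueqg K A d := RingQuot.mkAlgHom (Kq K) (ERel K A d) (ι (Kq K) (EGen.Y i))
def genZ (i : Fin n) : Ueqg K A d := RingQuot.mkAlgHom (Kq K) (ERel K A d) (ι (Kq K) (EGen.Z i))

/-- `A` is a symmetrizable generalized Cartan matrix with symmetrizing positive,
relatively prime integers `d_i`, and `n ≥ 1`. -/
def IsSymmetrizableGCM {n : ℕ} (A : Matrix (Fin n) (Fin n) ℤ) (d : Fin n → ℕ) : Prop :=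
  0 < n ∧ (∀ i, A i i = 2) ∧ (∀ i j, i ≠ j → A i j ≤ 0) ∧
    (∀ i, 0 < d i) ∧ Finset.univ.gcd d = 1 ∧
    (∀ i j, (d i : ℤ) * A i j = (d j : ℤ) * A j i)

end

/-!
Write `Ŷ = K_i⁻¹ + (q_i - q_i⁻¹) F_i`, `x_m = K_i^{-m} K_j⁻¹` and `t_m = q_i^{-A_ij-2m}`. Since `x_m`
commutes with `K_i⁻¹` and `x_m F_i = t_m⁻¹ F_i x_m`, the relations give
`Ŷ x_m - t_m x_m Ŷ = (1 - t_m) x_{m+1}`. Applying the maps `x ↦ Ŷ x - t_k x Ŷ` for `k < N = 1 - A_ij`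
to `x_0` therefore yields `∏_{k<N} (1 - t_k) x_N`, while expanding the same composite yields
`Σ_r (-1)^r e_r(t_0, …, t_{N-1}) Ŷ^{N-r} x_0 Ŷ^r`. By the q-binomial theorem,
`e_r(t_0, …, t_{N-1}) = q_i^{r(1-A_ij-N)} [N choose r]_i`, which is `[N choose r]_i` for this `N`.
-/

open Finset

namespace Multiset

variable {R : Type*} [CommSemiring R]

theorem esymm_zero (s : Multiset R) : s.esymm 0 = 1 := by
  simp [esymm]

theorem esymm_cons_succ (a : R) (s : Multiset R) (n : ℕ) :
    (a ::ₘ s).esymm (n + 1) = s.esymm (n + 1) + a * s.esymm n := by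
  simp [esymm, powersetCard_cons, sum_map_mul_left]

theorem esymm_eq_zero_of_card_lt {s : Multiset R} {n : ℕ} (h : card s < n) : s.esymm n = 0 := by
  simp [esymm, powersetCard_eq_empty _ h]

end Multiset

section TwistedCommutator

variable {𝕜 R : Type*} [CommRing 𝕜] [Ring R] [Algebra 𝕜 R]

theorem pow_mul_eq_pow_smul_mul_pow {x f : R} {s : 𝕜} (h : x * f = s • (f * x)) (m : ℕ) :
    x ^ m * f = s ^ m • (f * x ^ m) := by
  induction m with
  | zero => simp
  | succ m ih =>
    rw [pow_succ, mul_assoc, h, mul_smul_comm, ← mul_assoc, ih, smul_mul_assoc, smul_smul,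
      ← pow_succ', mul_assoc, ← pow_succ]

theorem mul_mul_eq_mul_smul_mul_mul {x y f : R} {s s' : 𝕜} (hx : x * f = s • (f * x))
    (hy : y * f = s' • (f * y)) : x * y * f = (s * s') • (f * (x * y)) := by
  rw [mul_assoc, hy, mul_smul_comm, ← mul_assoc, hx, smul_mul_assoc, smul_smul, mul_comm s,
    mul_assoc]

theorem add_smul_mul_sub_smul_mul_add_smul {a f x : R} {c s t : 𝕜} (hax : x * a = a * x)
    (hxf : x * f = s • (f * x)) (hts : t * s = 1) :
    (a + c • f) * x - t • (x * (a + c • f)) = (1 - t) • (a * x) := by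
  rw [add_mul, mul_add, hax, mul_smul_comm, hxf, smul_mul_assoc]
  linear_combination (norm := module) (-c) • hts • (f * x)

variable (t : ℕ → 𝕜) (Y : R)

def twistedCommIter : ℕ → R → R
  | 0, x => x
  | m + 1, x => Y * twistedCommIter m x - t m • (twistedCommIter m x * Y)

theorem twistedCommIter_eq_sum (m : ℕ) (x : R) :
    twistedCommIter t Y m x = ∑ r ∈ range (m + 1),
      ((-1) ^ r * ((Multiset.range m).map t).esymm r) • (Y ^ (m - r) * x * Y ^ r) := by
  induction m with
  | zero => simp [twistedCommIter, Multiset.esymm_zero]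
  | succ m ih =>
    set e := ((Multiset.range m).map t).esymm
    have he : e (m + 1) = 0 := Multiset.esymm_eq_zero_of_card_lt (by simp)
    have hYS : Y * twistedCommIter t Y m x = ∑ r ∈ range (m + 1),
        ((-1) ^ (r + 1) * e (r + 1)) • (Y ^ (m - r) * x * Y ^ (r + 1)) + Y ^ (m + 1) * x := by
      conv_rhs => rw [sum_range_succ, he, mul_zero, zero_smul, add_zero]
      rw [ih, mul_sum, sum_range_succ']
      simp only [mul_smul_comm, ← mul_assoc, ← pow_succ']
      congr 1
      · refine sum_congr rfl fun r hr => ?_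
        rw [show m - (r + 1) + 1 = m - r by grind]
      · simp [e, Multiset.esymm_zero]
    have hSY : t m • (twistedCommIter t Y m x * Y) = ∑ r ∈ range (m + 1),
        (-((-1) ^ (r + 1) * (t m * e r))) • (Y ^ (m - r) * x * Y ^ (r + 1)) := by
      rw [ih, sum_mul, smul_sum]
      refine sum_congr rfl fun r _ => ?_
      rw [smul_mul_assoc, smul_smul, mul_assoc _ (Y ^ r), ← pow_succ]
      congr 1
      ring
    rw [twistedCommIter, hYS, hSY, sum_range_succ' _ (m + 1), Multiset.range_succ,
      Multiset.map_cons]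
    simp only [Multiset.esymm_cons_succ, Multiset.esymm_zero, mul_add, add_smul, sum_add_distrib,
      neg_smul, sum_neg_distrib, Nat.add_sub_add_right, sub_neg_eq_add, pow_zero, mul_one,
      tsub_zero, one_smul, e]
    abel

theorem twistedCommIter_eq_prod_smul (x : ℕ → R)
    (hx : ∀ k, Y * x k - t k • (x k * Y) = (1 - t k) • x (k + 1)) (m : ℕ) :
    twistedCommIter t Y m (x 0) = (∏ k ∈ range m, (1 - t k)) • x m := by
  induction m with
  | zero => simp [twistedCommIter]
  | succ m ih =>
    rw [twistedCommIter, ih, mul_smul_comm, smul_mul_assoc, smul_comm (t m), ← smul_sub, hx,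
      smul_smul, prod_range_succ]

end TwistedCommutator

section QNumbers

variable (K : Type) [Field K] (di : ℕ)

theorem qi_ne_zero : qi K di ≠ 0 :=
  pow_ne_zero _ RatFunc.X_ne_zero

theorem qi_zpow_ne_one (hdi : 0 < di) {z : ℤ} (hz : z ≠ 0) : qi K di ^ z ≠ 1 := by
  classical
  intro h
  have := congrArg (RatFunc.inftyValuation K) h
  rw [qi, qv, ← zpow_natCast, ← zpow_mul, RatFunc.inftyValuation.X_zpow, map_one,
    WithZero.exp_eq_one] at this
  exact hz ((mul_eq_zero.mp this).resolve_left (by omega))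

theorem qi_zpow_sub_zpow_neg_ne_zero (hdi : 0 < di) {m : ℤ} (hm : m ≠ 0) :
    qi K di ^ m - qi K di ^ (-m) ≠ 0 := by
  rw [sub_ne_zero, Ne, ← div_eq_one_iff_eq (zpow_ne_zero _ (qi_ne_zero K di)),
    ← zpow_sub₀ (qi_ne_zero K di)]
  exact qi_zpow_ne_one K di hdi (by omega)

theorem qnum_ne_zero (hdi : 0 < di) {m : ℤ} (hm : m ≠ 0) : qnum K di m ≠ 0 := by
  have hden := qi_zpow_sub_zpow_neg_ne_zero K di hdi one_ne_zero
  rw [zpow_one, zpow_neg_one] at hden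
  exact div_ne_zero (qi_zpow_sub_zpow_neg_ne_zero K di hdi hm) hden

theorem qfac_ne_zero (hdi : 0 < di) (m : ℕ) : qfac K di m ≠ 0 := by
  induction m with
  | zero => exact one_ne_zero
  | succ m ih => exact mul_ne_zero (qnum_ne_zero K di hdi (by omega)) ih

theorem qi_zpow_eq_of_mul_eq {dj : ℕ} {a b : ℤ} (h : (di : ℤ) * a = dj * b) :
    qi K dj ^ b = qi K di ^ a := by
  simp only [qi, qv, ← zpow_natCast, ← zpow_mul, h]

theorem qnum_add (a b : ℤ) :
    qnum K di (a + b) = qi K di ^ b * qnum K di a + qi K di ^ (-a) * qnum K di b := by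
  simp only [qnum, mul_div_assoc', ← add_div, mul_sub, ← zpow_add₀ (qi_ne_zero K di)]
  ring_nf

theorem qbin_zero_right (hdi : 0 < di) (m : ℕ) : qbin K di m 0 = 1 := by
  simp [qbin, qfac, qfac_ne_zero K di hdi]

theorem qbin_self (hdi : 0 < di) (m : ℕ) : qbin K di m m = 1 := by
  simp [qbin, qfac, qfac_ne_zero K di hdi]

theorem qbin_succ_succ (hdi : 0 < di) {m r : ℕ} (hrm : r < m) :
    qbin K di (m + 1) (r + 1) =
      qi K di ^ ((r : ℤ) + 1) * qbin K di m (r + 1) + qi K di ^ ((r : ℤ) - m) * qbin K di m r := by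
  obtain ⟨a, rfl⟩ : ∃ a, m = r + 1 + a := ⟨m - r - 1, by omega⟩
  have hsplit := qnum_add K di (a + 1) (r + 1)
  have hfac (k : ℕ) : qfac K di (k + 1) = qnum K di (k + 1) * qfac K di k := rfl
  have hqfac := qfac_ne_zero K di hdi
  have hqnum_r := qnum_ne_zero K di hdi (m := r + 1) (by omega)
  have hqnum_a := qnum_ne_zero K di hdi (m := a + 1) (by omega)
  rw [qbin, qbin, qbin, show r + 1 + a + 1 - (r + 1) = a + 1 by omega,
    show r + 1 + a - (r + 1) = a by omega, show r + 1 + a - r = a + 1 by omega, hfac, hfac,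
    hfac]
  push_cast at *
  rw [show (r : ℤ) + 1 + a + 1 = a + 1 + (r + 1) by ring, hsplit,
    show (r : ℤ) - (r + 1 + a) = -(a + 1) by ring]
  field_simp

end QNumbers

theorem esymm_map_range_qi_zpow (K : Type) [Field K] {di : ℕ} (hdi : 0 < di) (u : ℤ)
    {m r : ℕ} (hrm : r ≤ m) :
    ((Multiset.range m).map fun k : ℕ => qi K di ^ (u - 2 * k)).esymm r =
      qi K di ^ ((r : ℤ) * (u + 1 - m)) * qbin K di m r := by
  have hq := qi_ne_zero K di
  induction m generalizing r with
  | zero =>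
    obtain rfl : r = 0 := by omega
    simp [Multiset.esymm_zero, qbin_zero_right K di hdi]
  | succ m ih =>
    rcases r with _ | r
    · simp [Multiset.esymm_zero, qbin_zero_right K di hdi]
    rw [Multiset.range_succ, Multiset.map_cons, Multiset.esymm_cons_succ]
    rcases Nat.lt_or_ge r m with hr | hr
    · rw [ih hr, ih hr.le, qbin_succ_succ K di hdi hr]
      simp only [mul_add, ← mul_assoc, ← zpow_add₀ hq]
      congr 3 <;> push_cast <;> ring
    · obtain rfl : r = m := by omega
      rw [Multiset.esymm_eq_zero_of_card_lt (by simp), ih le_rfl, qbin_self K di hdi,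
        qbin_self K di hdi, zero_add, ← mul_assoc, ← zpow_add₀ hq]
      push_cast
      ring_nf

section Chevalley

variable (K : Type) [Field K] {n : ℕ} (A : Matrix (Fin n) (Fin n) ℤ) (d : Fin n → ℕ)

noncomputable def genKUnit (i : Fin n) : (Uqg K A d)ˣ where
  val := genK K A d i
  inv := genKinv K A d i
  val_inv := by
    simpa [genK, genKinv] using RingQuot.mkAlgHom_rel (Kq K) (CRel.R1a (K := K) (A := A) (d := d) i)
  inv_val := by
    simpa [genK, genKinv] using RingQuot.mkAlgHom_rel (Kq K) (CRel.R1b (K := K) (A := A) (d := d) i)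

theorem commute_genKinv (i j : Fin n) : Commute (genKinv K A d i) (genKinv K A d j) := by
  have hK : Commute (genKUnit K A d i : Uqg K A d) (genKUnit K A d j) := by
    change genK K A d i * genK K A d j = genK K A d j * genK K A d i
    simpa [genK] using RingQuot.mkAlgHom_rel (Kq K) (CRel.R2 (K := K) (A := A) (d := d) i j)
  exact hK.units_inv_left.units_inv_right

theorem genKinv_mul_genF (i j : Fin n) :
    genKinv K A d i * genF K A d j = qi K (d i) ^ A i j • (genF K A d j * genKinv K A d i) := by
  have hR4 : genK K A d i * genF K A d j * genKinv K A d i =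
      qi K (d i) ^ (-A i j) • genF K A d j := by
    simpa [genK, genKinv, genF] using
      RingQuot.mkAlgHom_rel (Kq K) (CRel.R4 (K := K) (A := A) (d := d) i j)
  have hFKinv : genF K A d j * genKinv K A d i =
      qi K (d i) ^ (-A i j) • (genKinv K A d i * genF K A d j) := by
    have hKinvK : genKinv K A d i * genK K A d i = 1 := (genKUnit K A d i).inv_mul
    rw [← mul_smul_comm, ← hR4, ← mul_assoc, ← mul_assoc, hKinvK, one_mul]
  rw [hFKinv, smul_smul, ← zpow_add₀ (qi_ne_zero K _), add_neg_cancel, zpow_zero, one_smul]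

noncomputable def genYhat (i : Fin n) : Uqg K A d :=
  genKinv K A d i + (qi K (d i) - (qi K (d i))⁻¹) • genF K A d i

variable {A d} {i j : Fin n}

theorem genKinv_pow_mul_genKinv_mul_genF (hAii : A i i = 2)
    (hsymm : (d i : ℤ) * A i j = d j * A j i) (m : ℕ) :
    genKinv K A d i ^ m * genKinv K A d j * genF K A d i =
      qi K (d i) ^ (2 * (m : ℤ) + A i j) •
        (genF K A d i * (genKinv K A d i ^ m * genKinv K A d j)) := by
  rw [mul_mul_eq_mul_smul_mul_mul (pow_mul_eq_pow_smul_mul_pow (genKinv_mul_genF K A d i i) m)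
    (genKinv_mul_genF K A d j i), hAii, qi_zpow_eq_of_mul_eq K _ hsymm, ← zpow_natCast,
    ← zpow_mul, ← zpow_add₀ (qi_ne_zero K _), mul_comm (2 : ℤ)]

theorem genYhat_mul_sub_smul_mul_genYhat (hAii : A i i = 2)
    (hsymm : (d i : ℤ) * A i j = d j * A j i) (m : ℕ) :
    genYhat K A d i * (genKinv K A d i ^ m * genKinv K A d j) -
        qi K (d i) ^ (-A i j - 2 * (m : ℤ)) •
          (genKinv K A d i ^ m * genKinv K A d j * genYhat K A d i) =
      (1 - qi K (d i) ^ (-A i j - 2 * (m : ℤ))) •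
        (genKinv K A d i ^ (m + 1) * genKinv K A d j) := by
  rw [pow_succ', mul_assoc (genKinv K A d i)]
  refine add_smul_mul_sub_smul_mul_add_smul ?_ (genKinv_pow_mul_genKinv_mul_genF K hAii hsymm m) ?_
  · exact (((Commute.refl _).pow_left m).mul_left (commute_genKinv K A d j i)).eq
  · rw [← zpow_add₀ (qi_ne_zero K _), show -A i j - 2 * (m : ℤ) + (2 * m + A i j) = 0 by ring,
      zpow_zero]

end Chevalley

/-- In `U_q(g)`, for `i ≠ j`,
`Σ_{r=0}^{1-A_ij} (-1)^r [1-A_ij choose r]_i Ŷ_i^{1-A_ij-r} K_j⁻¹ Ŷ_i^r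
  = K_i^{A_ij-1} K_j⁻¹ Π_{s=0}^{-A_ij}(1 - q_i^{A_ij+2s})`
where `Ŷ_i = K_i⁻¹ + F_i(q_i - q_i⁻¹)`. -/
theorem serre_sum_middle_Kinv (K : Type) [Field K] {n : ℕ}
    (A : Matrix (Fin n) (Fin n) ℤ) (d : Fin n → ℕ) (hA : IsSymmetrizableGCM A d)
    (i j : Fin n) (hij : i ≠ j) :
    ∑ r ∈ Finset.range ((1 - A i j).toNat + 1),
      ((-1 : Kq K) ^ r * qbin K (d i) (1 - A i j).toNat r) •
        ((genKinv K A d i + (qi K (d i) - (qi K (d i))⁻¹) • genF K A d i) ^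
            ((1 - A i j).toNat - r) *
          genKinv K A d j *
          (genKinv K A d i + (qi K (d i) - (qi K (d i))⁻¹) • genF K A d i) ^ r) =
    (∏ s ∈ Finset.range ((-(A i j)).toNat + 1), (1 - qi K (d i) ^ (A i j + 2 * (s : ℤ)))) •
      (genKinv K A d i ^ (1 - A i j).toNat * genKinv K A d j) := by
  obtain ⟨-, hdiag, hoff, hdpos, -, hsymm⟩ := hA
  have hAij := hoff i j hij
  set N := (1 - A i j).toNat
  have hN : (N : ℤ) = 1 - A i j := Int.toNat_of_nonneg (by omega)
  have key := twistedCommIter_eq_prod_smul (fun k => qi K (d i) ^ (-A i j - 2 * (k : ℤ)))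
    (genYhat K A d i) (fun m => genKinv K A d i ^ m * genKinv K A d j)
    (genYhat_mul_sub_smul_mul_genYhat K (hdiag i) (hsymm i j)) N
  rw [twistedCommIter_eq_sum, pow_zero, one_mul] at key
  convert key using 1
  · refine sum_congr rfl fun r hr => ?_
    rw [esymm_map_range_qi_zpow K (hdpos i) _ (Nat.lt_succ_iff.mp (mem_range.mp hr)), hN,
      show -A i j + 1 - (1 - A i j) = 0 by ring, mul_zero, zpow_zero, one_mul]
    rfl
  · congr 1
    rw [show (-A i j).toNat + 1 = N by omega, ← prod_range_reflect]
    refine prod_congr rfl fun s hs => ?_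
    rw [show ((N - 1 - s : ℕ) : ℤ) = N - 1 - s by rw [mem_range] at hs; omega, hN]
    ring_nf
end

section
/- There exists a 𝕂(q)-algebra antiautomorphism of the equitable algebra U satisfying X_i^{±1} ↦ X_i^{±1}, Y_i ↦ Z_i, Z_i ↦ Y_i for 1 ≤ i ≤ n. -/
open FreeAlgebra
open scoped TensorProduct

noncomputable section EqAntiHelpers

namespace EqAnti

open MulOpposite

variable (K : Type) [Field K] {n : ℕ} (A : Matrix (Fin n) (Fin n) ℤ) (d : Fin n → ℕ)

lemma qsym (hsym : ∀ i j, (d i : ℤ) * A i j = (d j : ℤ) * A j i) (i j : Fin n) :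
    qi K (d i) ^ (A i j) = qi K (d j) ^ (A j i) := by
  unfold qi qv
  rw [← zpow_natCast (RatFunc.X : Kq K) (d i), ← zpow_natCast (RatFunc.X : Kq K) (d j),
    ← zpow_mul, ← zpow_mul, hsym i j]

lemma qbin_symm (di : ℕ) {a r : ℕ} (h : r ≤ a) : qbin K di a (a - r) = qbin K di a r := by
  unfold qbin
  rw [Nat.sub_sub_self h, mul_comm]

lemma sign_sub {a r : ℕ} (h : r ≤ a) : (-1 : Kq K) ^ (a - r) = (-1) ^ a * (-1) ^ r := by
  have h4 : (-1 : Kq K) ^ r * (-1) ^ r = 1 := by rw [← mul_pow]; norm_num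
  calc (-1 : Kq K) ^ (a - r) = (-1) ^ (a - r) * ((-1) ^ r * (-1) ^ r) := by rw [h4, mul_one]
    _ = ((-1) ^ (a - r) * (-1) ^ r) * (-1) ^ r := by rw [mul_assoc]
    _ = (-1) ^ a * (-1) ^ r := by rw [← pow_add, Nat.sub_add_cancel h]

lemma prodP_zero (di : ℕ) {b : ℤ} (hb : b ≤ 0) (ho : Odd (1 - b).toNat) :
    (∏ s ∈ Finset.range ((-b).toNat + 1), (1 - qi K di ^ (b + 2 * (s : ℤ)))) = 0 := by
  set m := (-b).toNat with hmdef
  have hm : (m : ℤ) = -b := Int.toNat_of_nonneg (by omega)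
  have ha : (1 - b).toNat = m + 1 := by omega
  rw [ha] at ho
  have hev : Even m := by
    rcases Nat.even_or_odd m with h | h
    · exact h
    · exact absurd (h.add_one) (Nat.not_even_iff_odd.mpr ho)
  obtain ⟨t, ht⟩ := hev
  apply Finset.prod_eq_zero (i := t) (Finset.mem_range.mpr (by omega))
  have ht' : (m : ℤ) = t + t := by exact_mod_cast congrArg (Nat.cast : ℕ → ℤ) ht
  have hz : b + 2 * (t : ℤ) = 0 := by omega
  rw [hz, zpow_zero, sub_self]

/-- The key sum-reversal computation. -/
lemma rev_sum {R : Type*} [Ring R] [Algebra (Kq K) R] (di a : ℕ) (u v w1 w2 : R) (P : Kq K)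
    (hP : Odd a → P = 0) (hcomm : w1 * w2 = w2 * w1)
    (H : ∑ r ∈ Finset.range (a + 1), ((-1 : Kq K) ^ r * qbin K di a r) • (u ^ (a - r) * v * u ^ r)
      = P • (w1 * w2)) :
    ∑ r ∈ Finset.range (a + 1), ((-1 : Kq K) ^ r * qbin K di a r) • (u ^ r * (v * u ^ (a - r)))
      = P • (w2 * w1) := by
  set g : ℕ → R := fun s => ((-1 : Kq K) ^ s * qbin K di a s) • (u ^ (a - s) * v * u ^ s)
    with hg
  have h4 : (-1 : Kq K) ^ a * (-1) ^ a = 1 := by rw [← mul_pow]; norm_num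
  have hterm : ∀ r ∈ Finset.range (a + 1),
      ((-1 : Kq K) ^ r * qbin K di a r) • (u ^ r * (v * u ^ (a - r)))
        = (-1 : Kq K) ^ a • g (a - r) := by
    intro r hr
    have hr' : r ≤ a := Nat.lt_succ_iff.mp (Finset.mem_range.mp hr)
    have h1 : a - (a - r) = r := Nat.sub_sub_self hr'
    rw [hg]
    simp only
    rw [h1, qbin_symm K di hr', sign_sub K hr', smul_smul, ← mul_assoc (u ^ r) v,
      ← mul_assoc, ← mul_assoc, h4, one_mul]
  calc ∑ r ∈ Finset.range (a + 1), ((-1 : Kq K) ^ r * qbin K di a r) • (u ^ r * (v * u ^ (a - r)))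
      = ∑ r ∈ Finset.range (a + 1), (-1 : Kq K) ^ a • g (a - r) :=
        Finset.sum_congr rfl hterm
    _ = (-1 : Kq K) ^ a • ∑ r ∈ Finset.range (a + 1), g (a - r) := by rw [Finset.smul_sum]
    _ = (-1 : Kq K) ^ a • ∑ r ∈ Finset.range (a + 1), g r := by
        congr 1
        have := Finset.sum_range_reflect g (a + 1)
        simpa using this
    _ = (-1 : Kq K) ^ a • (P • (w1 * w2)) := by rw [hg]; rw [H]
    _ = ((-1 : Kq K) ^ a * P) • (w1 * w2) := by rw [smul_smul]
    _ = P • (w2 * w1) := by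
        rcases Nat.even_or_odd a with he | ho
        · rw [he.neg_one_pow, one_mul, hcomm]
        · rw [hP ho, mul_zero, zero_smul, zero_smul]

end EqAnti

end EqAntiHelpers
noncomputable section EqAntiMain

namespace EqAnti

open MulOpposite

variable (K : Type) [Field K] {n : ℕ} (A : Matrix (Fin n) (Fin n) ℤ) (d : Fin n → ℕ)

lemma relE1a (i : Fin n) : genX K A d i * genXinv K A d i = 1 := by
  simpa [genX, genXinv, map_mul, map_one] using
    RingQuot.mkAlgHom_rel (Kq K) (ERel.E1a (K := K) (A := A) (d := d) i)

lemma relE1b (i : Fin n) : genXinv K A d i * genX K A d i = 1 := by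
  simpa [genX, genXinv, map_mul, map_one] using
    RingQuot.mkAlgHom_rel (Kq K) (ERel.E1b (K := K) (A := A) (d := d) i)

lemma relE2 (i j : Fin n) : Commute (genX K A d i) (genX K A d j) := by
  have := RingQuot.mkAlgHom_rel (Kq K) (ERel.E2 (K := K) (A := A) (d := d) i j)
  simpa [genX, map_mul, Commute, SemiconjBy] using this

/-- `X_i` as a unit. -/
def ux (i : Fin n) : (Ueqg K A d)ˣ :=
  ⟨genX K A d i, genXinv K A d i, relE1a K A d i, relE1b K A d i⟩

lemma commXinvX (i j : Fin n) : Commute (genXinv K A d i) (genX K A d j) :=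
  Commute.units_inv_left (u := ux K A d i) (relE2 K A d i j)

lemma commXinvXinv (i j : Fin n) : Commute (genXinv K A d i) (genXinv K A d j) :=
  Commute.units_inv_right (u := ux K A d j) (commXinvX K A d i j)

lemma relE3 (i j : Fin n) :
    genY K A d i * genX K A d j - qi K (d i) ^ (A i j) • (genX K A d j * genY K A d i)
      = (1 - qi K (d i) ^ (A i j)) • (genXinv K A d i * genX K A d j) := by
  simpa [genX, genY, genXinv, map_mul, map_sub, map_smul] using
    RingQuot.mkAlgHom_rel (Kq K) (ERel.E3 (K := K) (A := A) (d := d) i j)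

lemma relE4 (i j : Fin n) :
    genX K A d i * genZ K A d j - qi K (d i) ^ (A i j) • (genZ K A d j * genX K A d i)
      = (1 - qi K (d i) ^ (A i j)) • (genX K A d i * genXinv K A d j) := by
  simpa [genX, genZ, genXinv, map_mul, map_sub, map_smul] using
    RingQuot.mkAlgHom_rel (Kq K) (ERel.E4 (K := K) (A := A) (d := d) i j)

lemma relE5 (i : Fin n) :
    genZ K A d i * genY K A d i - (qi K (d i) ^ 2) • (genY K A d i * genZ K A d i)
      = (1 - qi K (d i) ^ 2) • (1 : Ueqg K A d) := by
  simpa [genY, genZ, map_mul, map_sub, map_smul, map_one] using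
    RingQuot.mkAlgHom_rel (Kq K) (ERel.E5 (K := K) (A := A) (d := d) i)

lemma relE6 (i j : Fin n) (hij : i ≠ j) :
    genZ K A d i * genY K A d j - qi K (d i) ^ (A i j) • (genY K A d j * genZ K A d i)
      = (1 - qi K (d i) ^ (A i j)) • (genXinv K A d i * genXinv K A d j) := by
  simpa [genY, genZ, genXinv, map_mul, map_sub, map_smul] using
    RingQuot.mkAlgHom_rel (Kq K) (ERel.E6 (K := K) (A := A) (d := d) i j hij)

lemma relE7 (i j : Fin n) (hij : i ≠ j) :
    ∑ r ∈ Finset.range ((1 - A i j).toNat + 1),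
        ((-1 : Kq K) ^ r * qbin K (d i) (1 - A i j).toNat r) •
          (genY K A d i ^ ((1 - A i j).toNat - r) * genY K A d j * genY K A d i ^ r)
      = (∏ s ∈ Finset.range ((-(A i j)).toNat + 1), (1 - qi K (d i) ^ (A i j + 2 * (s : ℤ)))) •
          (genXinv K A d i ^ (1 - A i j).toNat * genXinv K A d j) := by
  simpa [genY, genXinv, map_mul, map_sum, map_smul, map_pow] using
    RingQuot.mkAlgHom_rel (Kq K) (ERel.E7 (K := K) (A := A) (d := d) i j hij)

lemma relE8 (i j : Fin n) (hij : i ≠ j) :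
    ∑ r ∈ Finset.range ((1 - A i j).toNat + 1),
        ((-1 : Kq K) ^ r * qbin K (d i) (1 - A i j).toNat r) •
          (genZ K A d i ^ ((1 - A i j).toNat - r) * genZ K A d j * genZ K A d i ^ r)
      = (∏ s ∈ Finset.range ((-(A i j)).toNat + 1), (1 - qi K (d i) ^ (A i j + 2 * (s : ℤ)))) •
          (genXinv K A d i ^ (1 - A i j).toNat * genXinv K A d j) := by
  simpa [genZ, genXinv, map_mul, map_sum, map_smul, map_pow] using
    RingQuot.mkAlgHom_rel (Kq K) (ERel.E8 (K := K) (A := A) (d := d) i j hij)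

end EqAnti

end EqAntiMain
noncomputable section EqAntiPhi

namespace EqAnti

open MulOpposite

variable (K : Type) [Field K] {n : ℕ} (A : Matrix (Fin n) (Fin n) ℤ) (d : Fin n → ℕ)

def swgen : EGen n → (Ueqg K A d)ᵐᵒᵖ
  | .X i => op (genX K A d i)
  | .Xinv i => op (genXinv K A d i)
  | .Y i => op (genZ K A d i)
  | .Z i => op (genY K A d i)

def phi0 : FreeAlgebra (Kq K) (EGen n) →ₐ[Kq K] (Ueqg K A d)ᵐᵒᵖ :=
  FreeAlgebra.lift (Kq K) (swgen K A d)

@[simp] lemma phi0_ι (g : EGen n) : phi0 K A d (ι (Kq K) g) = swgen K A d g :=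
  FreeAlgebra.lift_ι_apply _ _

lemma phi0_rel (hsym : ∀ i j, (d i : ℤ) * A i j = (d j : ℤ) * A j i)
    (hneg : ∀ i j, i ≠ j → A i j ≤ 0) :
    ∀ ⦃x y⦄, ERel K A d x y → phi0 K A d x = phi0 K A d y := by
  intro x y h
  induction h with
  | E1a i =>
    simp only [map_mul, map_one, phi0_ι, swgen, ← op_mul, ← op_one, op_inj]
    exact relE1b K A d i
  | E1b i =>
    simp only [map_mul, map_one, phi0_ι, swgen, ← op_mul, ← op_one, op_inj]
    exact relE1a K A d i
  | E2 i j =>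
    simp only [map_mul, phi0_ι, swgen, ← op_mul, op_inj]
    exact (relE2 K A d j i).eq
  | E3 i j =>
    simp only [map_sub, map_smul, map_mul, phi0_ι, swgen, ← op_mul, ← op_smul, ← op_sub, op_inj]
    rw [qsym K A d hsym i j]
    exact relE4 K A d j i
  | E4 i j =>
    simp only [map_sub, map_smul, map_mul, phi0_ι, swgen, ← op_mul, ← op_smul, ← op_sub, op_inj]
    rw [qsym K A d hsym i j]
    exact relE3 K A d j i
  | E5 i =>
    simp only [map_sub, map_smul, map_mul, map_one, phi0_ι, swgen, ← op_mul, ← op_smul,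
      ← op_sub, ← op_one, op_inj]
    exact relE5 K A d i
  | E6 i j hij =>
    simp only [map_sub, map_smul, map_mul, phi0_ι, swgen, ← op_mul, ← op_smul, ← op_sub, op_inj]
    rw [qsym K A d hsym i j]
    exact relE6 K A d j i hij.symm
  | E7 i j hij =>
    simp only [map_sum, map_smul, map_mul, map_pow, phi0_ι, swgen, ← op_pow, ← op_mul,
      ← op_smul, ← Finset.op_sum, op_inj]
    exact rev_sum K (d i) _ _ _ _ _ _
      (fun ho => prodP_zero K (d i) (hneg i j hij) ho)
      ((commXinvXinv K A d i j).pow_left _).eq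
      (relE8 K A d i j hij)
  | E8 i j hij =>
    simp only [map_sum, map_smul, map_mul, map_pow, phi0_ι, swgen, ← op_pow, ← op_mul,
      ← op_smul, ← Finset.op_sum, op_inj]
    exact rev_sum K (d i) _ _ _ _ _ _
      (fun ho => prodP_zero K (d i) (hneg i j hij) ho)
      ((commXinvXinv K A d i j).pow_left _).eq
      (relE7 K A d i j hij)

end EqAnti

end EqAntiPhi
noncomputable section EqAntiFinal

namespace EqAnti

open MulOpposite

variable (K : Type) [Field K] {n : ℕ} (A : Matrix (Fin n) (Fin n) ℤ) (d : Fin n → ℕ)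
variable (hsym : ∀ i j, (d i : ℤ) * A i j = (d j : ℤ) * A j i)
variable (hneg : ∀ i j, i ≠ j → A i j ≤ 0)

def phi : Ueqg K A d →ₐ[Kq K] (Ueqg K A d)ᵐᵒᵖ :=
  RingQuot.liftAlgHom (Kq K) ⟨phi0 K A d, phi0_rel K A d hsym hneg⟩

@[simp] lemma phi_mk (x : FreeAlgebra (Kq K) (EGen n)) :
    phi K A d hsym hneg (RingQuot.mkAlgHom (Kq K) (ERel K A d) x) = phi0 K A d x :=
  RingQuot.liftAlgHom_mkAlgHom_apply _ _ _ _

lemma phi_genX (i : Fin n) :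
    phi K A d hsym hneg (genX K A d i) = op (genX K A d i) := by
  rw [genX, phi_mk, phi0_ι]
  rfl

lemma phi_genXinv (i : Fin n) :
    phi K A d hsym hneg (genXinv K A d i) = op (genXinv K A d i) := by
  rw [genXinv, phi_mk, phi0_ι]
  rfl

lemma phi_genY (i : Fin n) :
    phi K A d hsym hneg (genY K A d i) = op (genZ K A d i) := by
  rw [genY, phi_mk, phi0_ι]
  rfl

lemma phi_genZ (i : Fin n) :
    phi K A d hsym hneg (genZ K A d i) = op (genY K A d i) := by
  rw [genZ, phi_mk, phi0_ι]
  rfl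

def psi : (Ueqg K A d)ᵐᵒᵖ →ₐ[Kq K] Ueqg K A d where
  toFun x := unop (phi K A d hsym hneg (unop x))
  map_one' := by simp
  map_mul' x y := by simp [unop_mul, map_mul]
  map_zero' := by simp
  map_add' x y := by simp [unop_add, map_add]
  commutes' r := by
    simp [MulOpposite.algebraMap_apply, AlgHom.commutes]

lemma psi_phi : (psi K A d hsym hneg).comp (phi K A d hsym hneg) = AlgHom.id _ _ := by
  apply RingQuot.ringQuot_ext'
  apply FreeAlgebra.hom_ext
  funext g
  show psi K A d hsym hneg (phi K A d hsym hneg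
    (RingQuot.mkAlgHom (Kq K) (ERel K A d) (ι (Kq K) g))) = _
  rw [phi_mk, phi0_ι]
  cases g <;>
    simp only [swgen, psi, AlgHom.coe_mk, RingHom.coe_mk, MonoidHom.coe_mk, OneHom.coe_mk,
      unop_op, phi_genX, phi_genXinv, phi_genY, phi_genZ] <;>
    rfl

lemma psi_phi_apply (x : Ueqg K A d) :
    psi K A d hsym hneg (phi K A d hsym hneg x) = x :=
  AlgHom.congr_fun (psi_phi K A d hsym hneg) x

lemma phi_psi : (phi K A d hsym hneg).comp (psi K A d hsym hneg) = AlgHom.id _ _ :=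
  AlgHom.ext fun x => unop_injective (psi_phi_apply K A d hsym hneg (unop x))

def mu : Ueqg K A d ≃ₐ[Kq K] (Ueqg K A d)ᵐᵒᵖ :=
  AlgEquiv.ofAlgHom (phi K A d hsym hneg) (psi K A d hsym hneg)
    (phi_psi K A d hsym hneg) (psi_phi K A d hsym hneg)

lemma mu_apply (x : Ueqg K A d) : mu K A d hsym hneg x = phi K A d hsym hneg x := rfl

end EqAnti

end EqAntiFinal
open MulOpposite in
/-- There is a `𝕂(q)`-algebra antiautomorphism of the equitable
algebra `U` (formalized as an algebra isomorphism `U ≃ Uᵐᵒᵖ`) with `X_i^{±1} ↦ X_i^{±1}`,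
`Y_i ↦ Z_i`, `Z_i ↦ Y_i`. -/
theorem exists_equitable_antiautomorphism (K : Type) [Field K] {n : ℕ}
    (A : Matrix (Fin n) (Fin n) ℤ) (d : Fin n → ℕ) (hA : IsSymmetrizableGCM A d) :
    ∃ μ : Ueqg K A d ≃ₐ[Kq K] (Ueqg K A d)ᵐᵒᵖ, ∀ i : Fin n,
      μ (genX K A d i) = op (genX K A d i) ∧
      μ (genXinv K A d i) = op (genXinv K A d i) ∧
      μ (genY K A d i) = op (genZ K A d i) ∧
      μ (genZ K A d i) = op (genY K A d i) := by
  obtain ⟨-, -, hneg, -, -, hsym⟩ := hA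
  exact ⟨EqAnti.mu K A d hsym hneg, fun i =>
    ⟨EqAnti.phi_genX K A d hsym hneg i, EqAnti.phi_genXinv K A d hsym hneg i,
     EqAnti.phi_genY K A d hsym hneg i, EqAnti.phi_genZ K A d hsym hneg i⟩⟩
end
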